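/- arXiv:1704.06037 — 2 statements merged into one kernel-verified Lean document; each statement's English description precedes it below -/
import Mathlib

section
/- Let π be a profile with an odd number n of voters, and let ≻₀ be a preference such that Flexible Condition 1 holds for π and ≻₀. Then for all alternatives a, b: a M_π b implies a ≻₀ b. Consequently, ≻₀ coincides with the majority relation on π. -/
/-!
If `b ≻₀ a`, swapping `a` and `b` in a preference that ranks `a` above `b` strictly lowers its
inversion distance to `≻₀`, so by Flexible Condition 1 the swapped preference is at least as
frequent. Summing over all such preferences, at most as many voters rank `a` above `b` as rank
`b` above `a`. Together with `a M_π b` the two counts are equal, so the number of voters is even.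
-/

open Classical

/-- Inversion distance between two preference relations: the number of (ordered
representatives of) unordered pairs ranked oppositely. For strict total orders,
each oppositely-ranked unordered pair {x,y} is counted exactly once. -/
noncomputable def invDist {A : Type*} [Fintype A] (r r' : A → A → Prop) : ℕ :=
  {p : A × A | r p.1 p.2 ∧ r' p.2 p.1}.ncard

/-- Frequency of a preference in a profile (list of preferences). -/
noncomputable def freq {A : Type*} (π : List (A → A → Prop)) (r : A → A → Prop) : ℕ :=
  {i : Fin π.length | π.get i = r}.ncard

/-- Number of voters in the profile ranking `a` above `b`. -/
noncomputable def votesFor {A : Type*} (π : List (A → A → Prop)) (a b : A) : ℕ :=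
  {i : Fin π.length | π.get i a b}.ncard

/-- The preference obtained by swapping alternatives `a` and `b` in the ranking. -/
def swapPref {A : Type*} [DecidableEq A] (a b : A) (r : A → A → Prop) : A → A → Prop :=
  fun x y => r (Equiv.swap a b x) (Equiv.swap a b y)

open Finset

section StrictTotalOrder

variable {A : Type*} {r : A → A → Prop} [IsStrictTotalOrder A r] {x y : A}

theorem not_rel_iff_rel_of_ne (hxy : x ≠ y) : ¬ r x y ↔ r y x := by
  refine ⟨fun h => ?_, asymm⟩
  rcases trichotomous_of r x y with h' | h' | h'
  exacts [absurd h' h, absurd h' hxy, h']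

end StrictTotalOrder

section SwapPref

variable {A : Type*} [DecidableEq A] {a b : A} {r : A → A → Prop}

instance [IsStrictTotalOrder A r] : IsStrictTotalOrder A (swapPref a b r) :=
  (Equiv.swap a b).injective.isStrictTotalOrder_onFun r

theorem swapPref_swapPref (a b : A) (r : A → A → Prop) : swapPref a b (swapPref a b r) = r := by
  funext x y
  simp [swapPref]

theorem swapPref_injective (a b : A) : Function.Injective (swapPref (A := A) a b) :=
  Function.LeftInverse.injective (swapPref_swapPref a b)

theorem swapPref_apply_right_left : swapPref a b r b a ↔ r a b := by
  simp [swapPref]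

variable {r0 : A → A → Prop} [IsStrictTotalOrder A r] [IsStrictTotalOrder A r0]

/-- A pair whose `r`-order is reversed by the swap meets `{a, b}`; in each case transitivity
through `b ≻₀ a` or `a ≻ b` applies. -/
theorem rel_swap_of_inversion_of_swapPref (hab : r a b) (hba : r0 b a) {x y : A}
    (hswap : swapPref a b r x y) (hyx : r y x) (hyx0 : r0 y x) :
    r0 (Equiv.swap a b y) (Equiv.swap a b x) := by
  have hxy : x ≠ y := by rintro rfl; exact irrefl _ hyx
  unfold swapPref at hswap
  rcases eq_or_ne x a with rfl | hxa
  · rcases eq_or_ne y b with rfl | hyb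
    · simp only [Equiv.swap_apply_left, Equiv.swap_apply_right] at hswap
      exact absurd hab (asymm hswap)
    · rw [Equiv.swap_apply_left, Equiv.swap_apply_of_ne_of_ne hxy.symm hyb] at hswap
      exact absurd (_root_.trans hswap hyx) (asymm hab)
  rcases eq_or_ne x b with rfl | hxb
  · rcases eq_or_ne y a with rfl | hya
    · exact absurd hyx0 (asymm hba)
    · rw [Equiv.swap_apply_right, Equiv.swap_apply_of_ne_of_ne hya hxy.symm]
      exact _root_.trans hyx0 hba
  rw [Equiv.swap_apply_of_ne_of_ne hxa hxb] at hswap ⊢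
  rcases eq_or_ne y a with rfl | hya
  · rw [Equiv.swap_apply_left]
    exact _root_.trans hba hyx0
  rcases eq_or_ne y b with rfl | hyb
  · rw [Equiv.swap_apply_right] at hswap
    exact absurd (_root_.trans hyx hswap) (asymm hab)
  rw [Equiv.swap_apply_of_ne_of_ne hya hyb] at hswap
  exact absurd hyx (asymm hswap)

theorem invDist_swapPref_lt [Fintype A] (hab : r a b) (hba : r0 b a) :
    invDist (swapPref a b r) r0 < invDist r r0 := by
  set s := Equiv.swap a b
  -- Pairs already ordered by `r` are kept, the others are moved by the swap; `(a, b)` is missed.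
  let φ : A × A → A × A := fun p => if r p.1 p.2 then p else (s p.1, s p.2)
  have hmaps : ∀ p ∈ {p : A × A | swapPref a b r p.1 p.2 ∧ r0 p.2 p.1},
      φ p ∈ {p : A × A | r p.1 p.2 ∧ r0 p.2 p.1} \ {(a, b)} := by
    rintro ⟨x, y⟩ ⟨hswap, hyx0⟩
    by_cases hxy : r x y
    · simp only [φ, if_pos hxy]
      refine ⟨⟨hxy, hyx0⟩, ?_⟩
      rintro ⟨⟩
      exact asymm hab (by simpa [swapPref] using hswap)
    · simp only [φ, if_neg hxy]
      have hne : x ≠ y := by rintro rfl; exact irrefl _ hswap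
      have hyx : r y x := (not_rel_iff_rel_of_ne hne).1 hxy
      refine ⟨⟨hswap, rel_swap_of_inversion_of_swapPref hab hba hswap hyx hyx0⟩, ?_⟩
      intro h
      simp only [Set.mem_singleton_iff, Prod.mk.injEq, s, Equiv.swap_apply_eq_iff,
        Equiv.swap_apply_left, Equiv.swap_apply_right] at h
      obtain ⟨rfl, rfl⟩ := h
      exact asymm hba hyx0
  have hinj : Set.InjOn φ {p : A × A | swapPref a b r p.1 p.2 ∧ r0 p.2 p.1} := by
    rintro ⟨x, y⟩ ⟨hxy', -⟩ ⟨u, v⟩ ⟨huv', -⟩ h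
    by_cases hxy : r x y <;> by_cases huv : r u v <;>
      simp only [φ, hxy, huv, if_true, if_false, Prod.mk.injEq] at h
    · rw [h.1, h.2]
    · exact absurd (by simpa [swapPref, s, h.1, h.2] using hxy') huv
    · exact absurd (by simpa [swapPref, s, ← h.1, ← h.2] using huv') hxy
    · rw [s.injective h.1, s.injective h.2]
  calc invDist (swapPref a b r) r0
      ≤ ({p : A × A | r p.1 p.2 ∧ r0 p.2 p.1} \ {(a, b)}).ncard :=
        Set.ncard_le_ncard_of_injOn φ hmaps hinj (Set.toFinite _)
    _ < invDist r r0 := Set.ncard_sdiff_singleton_lt_of_mem ⟨hab, hba⟩ (Set.toFinite _)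

end SwapPref

section Profile

variable {A : Type*} (π : List (A → A → Prop))

theorem freq_eq_card (q : A → A → Prop) : freq π q = #{i | π.get i = q} := by
  simp [freq, Set.ncard_eq_toFinset_card']

theorem votesFor_eq_card (a b : A) : votesFor π a b = #{i | π.get i a b} := by
  simp [votesFor, Set.ncard_eq_toFinset_card']

theorem sum_freq_eq_card (R : Finset (A → A → Prop)) :
    ∑ q ∈ R, freq π q = #{i | π.get i ∈ R} := by
  simp_rw [freq_eq_card]
  exact sum_card_fiberwise_eq_card_filter _ _ _

theorem votesFor_le_sum_freq {R : Finset (A → A → Prop)} {a b : A}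
    (hR : ∀ q ∈ π, q a b → q ∈ R) : votesFor π a b ≤ ∑ q ∈ R, freq π q := by
  rw [sum_freq_eq_card, votesFor_eq_card]
  exact card_le_card (monotone_filter_right _ fun i _ => hR _ (π.get_mem i))

theorem sum_freq_le_votesFor {R : Finset (A → A → Prop)} {a b : A} (hR : ∀ q ∈ R, q a b) :
    ∑ q ∈ R, freq π q ≤ votesFor π a b := by
  rw [sum_freq_eq_card, votesFor_eq_card]
  exact card_le_card (monotone_filter_right _ fun i _ => hR (π.get i))

theorem votesFor_add_votesFor (hπ : ∀ r ∈ π, IsStrictTotalOrder A r) {a b : A} (hab : a ≠ b) :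
    votesFor π a b + votesFor π b a = π.length := by
  have hba : #{i | π.get i b a} = #{i | ¬ π.get i a b} := by
    refine congrArg card (filter_congr fun i _ => ?_)
    have := hπ _ (π.get_mem i)
    exact (not_rel_iff_rel_of_ne hab).symm
  rw [votesFor_eq_card, votesFor_eq_card, hba, card_filter_add_card_filter_not, card_univ,
    Fintype.card_fin]

end Profile

section Flexible

variable {A : Type*} [Fintype A] {π : List (A → A → Prop)} {r0 : A → A → Prop}

def FlexibleCondition (π : List (A → A → Prop)) (r0 : A → A → Prop) : Prop :=
  ∀ r' r : A → A → Prop, IsStrictTotalOrder A r' → IsStrictTotalOrder A r →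
    freq π r' > freq π r → invDist r' r0 ≤ invDist r r0

variable [IsStrictTotalOrder A r0] {a b : A}

theorem FlexibleCondition.freq_le_freq_swapPref [DecidableEq A] (hflex : FlexibleCondition π r0)
    {r : A → A → Prop} [IsStrictTotalOrder A r] (hab : r a b) (hba : r0 b a) :
    freq π r ≤ freq π (swapPref a b r) :=
  not_lt.1 fun h => (invDist_swapPref_lt hab hba).not_ge (hflex _ _ inferInstance inferInstance h)

theorem FlexibleCondition.votesFor_le_votesFor (hflex : FlexibleCondition π r0)
    (hπ : ∀ r ∈ π, IsStrictTotalOrder A r) (hba : r0 b a) : votesFor π a b ≤ votesFor π b a := by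
  set R := π.toFinset.filter (· a b)
  have hR : ∀ q ∈ R, IsStrictTotalOrder A q ∧ q a b := fun q hq => by
    rw [mem_filter, List.mem_toFinset] at hq
    exact ⟨hπ q hq.1, hq.2⟩
  calc votesFor π a b ≤ ∑ q ∈ R, freq π q :=
        votesFor_le_sum_freq π fun q hq hab => by simpa [R] using ⟨hq, hab⟩
    _ ≤ ∑ q ∈ R, freq π (swapPref a b q) := sum_le_sum fun q hq => by
        have : IsStrictTotalOrder A q := (hR q hq).1
        exact hflex.freq_le_freq_swapPref (hR q hq).2 hba
    _ = ∑ q ∈ R.image (swapPref a b), freq π q :=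
        (sum_image fun _ _ _ _ h => swapPref_injective a b h).symm
    _ ≤ votesFor π b a := sum_freq_le_votesFor π <|
        forall_mem_image.2 fun q hq => swapPref_apply_right_left.2 (hR q hq).2

end Flexible

theorem flexible_odd_majority_coincides_general {A : Type*} [Fintype A]
    (π : List (A → A → Prop)) (hπ : ∀ r ∈ π, IsStrictTotalOrder A r)
    (hodd : Odd π.length)
    (r0 : A → A → Prop) (hr0 : IsStrictTotalOrder A r0)
    (hflex : ∀ r' r : A → A → Prop, IsStrictTotalOrder A r' → IsStrictTotalOrder A r →
      freq π r' > freq π r → invDist r' r0 ≤ invDist r r0) :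
    (∀ a b : A, a ≠ b → votesFor π b a ≤ votesFor π a b → r0 a b) ∧
    (∀ a b : A, a ≠ b → (r0 a b ↔ votesFor π b a ≤ votesFor π a b)) := by
  have hmaj : ∀ a b : A, a ≠ b → votesFor π b a ≤ votesFor π a b → r0 a b := by
    intro a b hab hle
    by_contra hnab
    have hba : r0 b a := (not_rel_iff_rel_of_ne hab).1 hnab
    have htie := le_antisymm (FlexibleCondition.votesFor_le_votesFor hflex hπ hba) hle
    refine Nat.not_even_iff_odd.2 hodd ⟨votesFor π a b, ?_⟩
    rw [← votesFor_add_votesFor π hπ hab, htie]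
  refine ⟨hmaj, fun a b hab => ⟨fun hab0 => ?_, hmaj a b hab⟩⟩
  by_contra hlt
  exact asymm hab0 (hmaj b a hab.symm (not_le.1 hlt).le)

/-- With an odd number of voters, Flexible Condition 1 implies that the weak
majority relation implies `≻₀`, and consequently `≻₀` coincides with the
majority relation (on distinct alternatives). -/
theorem flexible_odd_majority_coincides {A : Type*} [Fintype A]
    (hK : 3 ≤ Fintype.card A)
    (π : List (A → A → Prop)) (hπ : ∀ r ∈ π, IsStrictTotalOrder A r)
    (hodd : Odd π.length)
    (r0 : A → A → Prop) (hr0 : IsStrictTotalOrder A r0)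
    (hflex : ∀ r' r : A → A → Prop, IsStrictTotalOrder A r' → IsStrictTotalOrder A r →
      freq π r' > freq π r → invDist r' r0 ≤ invDist r r0) :
    (∀ a b : A, a ≠ b → votesFor π b a ≤ votesFor π a b → r0 a b) ∧
    (∀ a b : A, a ≠ b → (r0 a b ↔ votesFor π b a ≤ votesFor π a b)) :=
  flexible_odd_majority_coincides_general π hπ hodd r0 hr0 hflex
end

section
/- Let π be a profile and ≻₀ a preference such that Flexible Condition 1 holds for π and ≻₀. Then the top-ranked alternative of ≻₀ is a weak Condorcet winner of π: it weakly beats every other alternative in pairwise majority voting. -/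
/-!
If a ranking `r` puts `b` above `best`, swapping the two gives a ranking strictly closer to `r0`:
the map `swapInversion` injects its inversions into those of `r` and misses the pair `(b, best)`.
Flexible Condition 1 then makes `r` at most as frequent as its swap. The swap is an involution on
rankings exchanging "`b` above `best`" with "`best` above `b`", so summing frequencies over the
rankings with `b` above `best` bounds the votes for `b` by those for `best`.
-/

open Classical

section

variable {A : Type*}

theorem swapPref_involutive [DecidableEq A] (a b : A) :
    Function.Involutive (swapPref a b : (A → A → Prop) → A → A → Prop) := by
  intro r
  funext x y
  simp [swapPref]

theorem IsStrictTotalOrder.swapPref [DecidableEq A] {r : A → A → Prop} (a b : A)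
    (hr : IsStrictTotalOrder A r) : IsStrictTotalOrder A (swapPref a b r) :=
  (RelIso.preimage (Equiv.swap a b) r).toRelEmbedding.isStrictTotalOrder

theorem mem_of_freq_ne_zero {π : List (A → A → Prop)} {r : A → A → Prop} (h : freq π r ≠ 0) :
    r ∈ π := by
  obtain ⟨i, rfl⟩ := Set.nonempty_of_ncard_ne_zero h
  exact π.get_mem i

theorem votesFor_eq_sum_freq [Fintype A] (π : List (A → A → Prop)) (a c : A) :
    votesFor π a c = ∑ r, if r a c then freq π r else 0 := by
  simp only [votesFor, freq, Set.ncard_eq_toFinset_card', Set.toFinset_ofPred]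
  rw [Finset.card_filter, ← Finset.sum_fiberwise Finset.univ π.get]
  refine Finset.sum_congr rfl fun r _ => ?_
  rw [Finset.sum_congr rfl fun i hi => by rw [(Finset.mem_filter.1 hi).2], Finset.sum_const,
    smul_eq_mul, mul_ite, mul_one, mul_zero]

def inversions (r r0 : A → A → Prop) : Set (A × A) :=
  {p | r p.1 p.2 ∧ r0 p.2 p.1}

theorem ne_of_mem_inversions_of_isTop {r r0 : A → A → Prop} {best u v : A} [Std.Asymm r0]
    (hbest : ∀ y, y ≠ best → r0 best y) (h : (u, v) ∈ inversions r r0) : u ≠ best ∧ u ≠ v := by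
  have hvu : r0 v u := h.2
  refine ⟨?_, fun huv => asymm hvu (huv ▸ hvu)⟩
  rintro rfl
  exact asymm hvu (hbest v fun h => asymm hvu (h ▸ hvu))

section SwapWithTop

variable [DecidableEq A] {r r0 : A → A → Prop} {best b : A}

/-- Sends an inversion `(u, b)` of `swapPref best b r` that is not an inversion of `r`
to the inversion `(u, best)` of `r`, and fixes every other pair. -/
noncomputable def swapInversion (r : A → A → Prop) (best b : A) (p : A × A) : A × A :=
  if p.2 = b ∧ ¬ r p.1 b then (p.1, best) else p

theorem mapsTo_swapInversion [IsStrictOrder A r] [Std.Asymm r0]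
    (hbest : ∀ y, y ≠ best → r0 best y) (hb : r b best) :
    Set.MapsTo (swapInversion r best b) (inversions (swapPref best b r) r0)
      (inversions r r0 \ {(b, best)}) := by
  rintro ⟨u, v⟩ hp
  obtain ⟨hu, huv⟩ := ne_of_mem_inversions_of_isTop hbest hp
  obtain ⟨hr, hr0⟩ : r (Equiv.swap best b u) (Equiv.swap best b v) ∧ r0 v u := hp
  by_cases hub : u = b
  · subst u
    have hv : v ≠ best := fun h => asymm hb (by simpa [h] using hr)
    rw [Equiv.swap_apply_right, Equiv.swap_apply_of_ne_of_ne hv (Ne.symm huv)] at hr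
    simp [swapInversion, inversions, huv.symm, hv, _root_.trans hb hr, hr0]
  rw [Equiv.swap_apply_of_ne_of_ne hu hub] at hr
  by_cases hvb : v = b
  · subst v
    rw [Equiv.swap_apply_right] at hr
    by_cases hrub : r u b
    · simp [swapInversion, inversions, hrub, hr0, hub]
    · simp [swapInversion, inversions, hrub, hr, hbest u hu, hub]
  by_cases hvbest : v = best
  · subst v
    rw [Equiv.swap_apply_left] at hr
    simp [swapInversion, inversions, _root_.trans hr hb, hr0, hub]
  rw [Equiv.swap_apply_of_ne_of_ne hvbest hvb] at hr
  simp [swapInversion, inversions, hvb, hr, hr0, hub]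

theorem injOn_swapInversion [Std.Asymm r0] (hbest : ∀ y, y ≠ best → r0 best y) :
    Set.InjOn (swapInversion r best b) (inversions (swapPref best b r) r0) := by
  have both_mem : ∀ u, (u, b) ∈ inversions (swapPref best b r) r0 →
      (u, best) ∈ inversions (swapPref best b r) r0 → r u b := by
    intro u hub hubest
    obtain ⟨hu, hub⟩ := ne_of_mem_inversions_of_isTop hbest hub
    simpa [swapPref, Equiv.swap_apply_of_ne_of_ne hu hub] using hubest.1
  rintro ⟨u, v⟩ hp ⟨u', v'⟩ hq h
  simp only [swapInversion] at h
  split_ifs at h with hp' hq' hq'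
  · simp_all
  · obtain ⟨rfl, rfl⟩ := Prod.mk.inj h
    obtain ⟨rfl, hub⟩ := hp'
    exact absurd (both_mem u hp hq) hub
  · obtain ⟨rfl, rfl⟩ := Prod.mk.inj h
    obtain ⟨rfl, hub⟩ := hq'
    exact absurd (both_mem u hq hp) hub
  · exact h

theorem invDist_swapPref_lt_s9 [Fintype A] [IsStrictOrder A r] [Std.Asymm r0]
    (hbest : ∀ y, y ≠ best → r0 best y) (hb : r b best) :
    invDist (swapPref best b r) r0 < invDist r r0 :=
  calc invDist (swapPref best b r) r0 = (inversions (swapPref best b r) r0).ncard := rfl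
    _ ≤ (inversions r r0 \ {(b, best)}).ncard :=
      Set.ncard_le_ncard_of_injOn _ (mapsTo_swapInversion hbest hb) (injOn_swapInversion hbest)
    _ < invDist r r0 :=
      Set.ncard_sdiff_singleton_lt_of_mem ⟨hb, hbest b fun h => irrefl best (h ▸ hb)⟩

theorem freq_le_freq_swapPref [Fintype A] [Std.Asymm r0] {π : List (A → A → Prop)}
    (hπ : ∀ r ∈ π, IsStrictTotalOrder A r)
    (hflex : ∀ r' r : A → A → Prop, IsStrictTotalOrder A r' → IsStrictTotalOrder A r →
      freq π r' > freq π r → invDist r' r0 ≤ invDist r r0)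
    (hbest : ∀ y, y ≠ best → r0 best y) (hb : r b best) :
    freq π r ≤ freq π (swapPref best b r) := by
  by_contra! hlt
  have hr : IsStrictTotalOrder A r := hπ r (mem_of_freq_ne_zero (by omega))
  exact absurd (hflex _ _ hr (hr.swapPref best b) hlt) (invDist_swapPref_lt_s9 hbest hb).not_ge

end SwapWithTop

end

theorem flexible_best_is_weak_condorcet_general {A : Type*} [Fintype A]
    (π : List (A → A → Prop)) (hπ : ∀ r ∈ π, IsStrictTotalOrder A r)
    (r0 : A → A → Prop) (hr0 : IsStrictTotalOrder A r0)
    (hflex : ∀ r' r : A → A → Prop, IsStrictTotalOrder A r' → IsStrictTotalOrder A r →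
      freq π r' > freq π r → invDist r' r0 ≤ invDist r r0)
    (best : A) (hbest : ∀ y : A, y ≠ best → r0 best y) :
    ∀ b : A, b ≠ best → votesFor π b best ≤ votesFor π best b := by
  intro b _
  rw [votesFor_eq_sum_freq, votesFor_eq_sum_freq]
  calc ∑ r, (if r b best then freq π r else 0)
      ≤ ∑ r, if r b best then freq π (swapPref best b r) else 0 := by
        gcongr with r
        split_ifs with hb
        · exact freq_le_freq_swapPref hπ hflex hbest hb
        · rfl
    _ = ∑ r, if r best b then freq π r else 0 :=
        Fintype.sum_equiv (swapPref_involutive best b).toPerm _ _ fun r => by simp [swapPref]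

/-- Under Flexible Condition 1, the top-ranked alternative of `≻₀` is a weak
Condorcet winner. -/
theorem flexible_best_is_weak_condorcet {A : Type*} [Fintype A]
    (hK : 3 ≤ Fintype.card A)
    (π : List (A → A → Prop)) (hπ : ∀ r ∈ π, IsStrictTotalOrder A r)
    (r0 : A → A → Prop) (hr0 : IsStrictTotalOrder A r0)
    (hflex : ∀ r' r : A → A → Prop, IsStrictTotalOrder A r' → IsStrictTotalOrder A r →
      freq π r' > freq π r → invDist r' r0 ≤ invDist r r0)
    (best : A) (hbest : ∀ y : A, y ≠ best → r0 best y) :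
    ∀ b : A, b ≠ best → votesFor π b best ≤ votesFor π best b :=
  flexible_best_is_weak_condorcet_general π hπ r0 hr0 hflex best hbest
end
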